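/- arXiv:2403.16918 — 3 statements merged into one kernel-verified Lean document; each statement's English description precedes it below -/
import Mathlib

section
/- Let L be a field of characteristic 0, V a finite-dimensional L-vector space, G a group, H a subgroup of G of finite index, and ρ : G → GL(V) a representation. Then ρ is semisimple if and only if the restriction ρ|_H is semisimple. -/
/-!
Complete reducibility of `ρ` is complementedness of the complete lattice of `ρ`-invariant
subspaces.

If `ρ|_H` is completely reducible and `[G : H]` is invertible, averaging an `H`-equivariant
projection onto a `G`-invariant subspace `p` over `G ⧸ H` (Maschke) gives a `G`-equivariant one,
whose kernel is a `G`-invariant complement of `p`.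

Conversely (Clifford), for `N ⊴ G` the group `G` permutes the minimal `N`-invariant subspaces, so
their sum is `G`-invariant; a `G`-invariant complement of it contains no minimal `N`-invariant
subspace, so it is `0` and `V` is a sum of simple `N`-modules. Taking for `N` the normal core of
`H`, which has finite index in `H`, averaging over `H ⧸ N` then shows that `ρ|_H` is completely
reducible.
-/

noncomputable instance repAsModuleAddCommGroup {k G V : Type*} [CommSemiring k] [Monoid G]
    [AddCommGroup V] [Module k V] (ρ : Representation k G V) :
    AddCommGroup ρ.asModule :=
  inferInstanceAs (AddCommGroup V)

open scoped MonoidAlgebra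

instance CompleteSublattice.instIsModularLattice {α : Type*} [CompleteLattice α]
    [IsModularLattice α] (L : CompleteSublattice α) : IsModularLattice L :=
  ⟨fun {x y z} hxz ↦ by
    change ((x ⊔ y) ⊓ z : α) ≤ x ⊔ y ⊓ z
    exact IsModularLattice.sup_inf_le_assoc_of_le (y : α) hxz⟩

theorem complementedLattice_of_forall_fixed_exists_isCompl {α ι : Type*} [CompleteLattice α]
    [IsModularLattice α] [IsCompactlyGenerated α] [IsAtomic α] (e : ι → α ≃o α)
    (h : ∀ a, (∀ i, e i a = a) → ∃ b, IsCompl a b) : ComplementedLattice α := by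
  apply complementedLattice_of_sSup_atoms_eq_top
  set s := sSup {a : α | IsAtom a}
  have hs (i : ι) : e i s = s := by
    rw [OrderIso.map_sSup]
    refine le_antisymm (iSup₂_le fun a ha ↦ le_sSup ((e i).isAtom_iff a |>.2 ha))
      (sSup_le fun a ha ↦ ?_)
    obtain ⟨b, rfl⟩ := (e i).surjective a
    exact le_iSup₂_of_le b ((e i).isAtom_iff b |>.1 ha) le_rfl
  obtain ⟨b, hsb⟩ := h s hs
  obtain rfl | ⟨a, ha, hab⟩ := eq_bot_or_exists_atom_le b
  · simpa using hsb.sup_eq_top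
  · exact absurd (le_bot_iff.1 (hsb.disjoint (le_sSup ha) hab)) ha.ne_bot

section SumConjCosets

variable {G A : Type*} [Group G] [Semiring A] {ρ : G →* A} {H : Subgroup G}

lemma MonoidHom.conj_mul_of_commute {f : A} (hf : ∀ h ∈ H, Commute f (ρ h)) (g : G)
    {h : G} (hh : h ∈ H) : ρ (g * h) * f * ρ (g * h)⁻¹ = ρ g * f * ρ g⁻¹ := by
  rw [mul_inv_rev, map_mul, map_mul, mul_assoc (ρ g), ← (hf h hh).eq]
  simp only [mul_assoc]
  rw [← mul_assoc (ρ h), ← map_mul, mul_inv_cancel, map_one, one_mul]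

variable (ρ H) [Fintype (G ⧸ H)]

-- Once `f` commutes with `ρ H`, the summand does not depend on the representative `c.out`.
noncomputable def MonoidHom.sumConjCosets (f : A) : A :=
  ∑ c : G ⧸ H, ρ c.out * f * ρ c.out⁻¹

variable {ρ H}

lemma MonoidHom.commute_sumConjCosets {f : A} (hf : ∀ h ∈ H, Commute f (ρ h)) (g : G) :
    Commute (ρ.sumConjCosets H f) (ρ g) := by
  have hconj : ρ g * ρ.sumConjCosets H f * ρ g⁻¹ = ρ.sumConjCosets H f := by
    rw [sumConjCosets, Finset.mul_sum, Finset.sum_mul]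
    refine Fintype.sum_equiv (MulAction.toPerm g) _ _ fun c ↦ ?_
    obtain ⟨h, hh⟩ := QuotientGroup.mk_out_eq_mul H (g * c.out)
    rw [MulAction.toPerm_apply, ← MulAction.Quotient.coe_smul_out, smul_eq_mul, hh,
      ρ.conj_mul_of_commute hf _ h.2, mul_inv_rev, map_mul, map_mul]
    simp only [mul_assoc]
  calc ρ.sumConjCosets H f * ρ g = ρ g * ρ.sumConjCosets H f * ρ g⁻¹ * ρ g := by rw [hconj]
    _ = ρ g * ρ.sumConjCosets H f := by
      rw [mul_assoc, ← map_mul, inv_mul_cancel, map_one, mul_one]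

end SumConjCosets

namespace Representation

variable {k G V : Type*} [Field k] [AddCommGroup V] [Module k V]

section Monoid

variable [Monoid G] (ρ : Representation k G V)

def invtCompleteSublattice : CompleteSublattice (Submodule k V) :=
  .mk' ρ.invtSubmodule
    (fun _s hs ↦ ρ.mem_invtSubmodule.2 fun g ↦ sSup_le fun _p hp ↦
      (ρ.mem_invtSubmodule.1 (hs hp) g).trans (Submodule.comap_mono (le_sSup hp)))
    (fun _s hs ↦ ρ.mem_invtSubmodule.2 fun g ↦ Submodule.map_le_iff_le_comap.1 <|
      le_sInf fun _p hp ↦ Submodule.map_le_iff_le_comap.2 <|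
        (sInf_le hp).trans (ρ.mem_invtSubmodule.1 (hs hp) g))

variable {ρ} in
lemma mem_invtCompleteSublattice {p : Submodule k V} :
    p ∈ ρ.invtCompleteSublattice ↔ ∀ g, ∀ v ∈ p, ρ g v ∈ p := by
  show p ∈ ρ.invtSubmodule ↔ _
  simp [mem_invtSubmodule, Module.End.mem_invtSubmodule, SetLike.le_def]

lemma isSemisimpleModule_asModule_iff :
    IsSemisimpleModule k[G] ρ.asModule ↔ ComplementedLattice ρ.invtCompleteSublattice := by
  let e : ρ.invtCompleteSublattice ≃o Submodule k[G] ρ.asModule :=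
    (OrderIso.setCongr _ _ rfl).trans ρ.mapSubmodule
  rw [isSemisimpleModule_iff, e.complementedLattice_iff]

lemma invtCompleteSublattice_le_comp {G' : Type*} [Monoid G'] (f : G' →* G) :
    ρ.invtCompleteSublattice ≤ invtCompleteSublattice (ρ.comp f) := fun _p hp ↦
  mem_invtCompleteSublattice.2 fun g ↦ mem_invtCompleteSublattice.1 hp (f g)

end Monoid

section Group

variable [Group G] (ρ : Representation k G V)

lemma invtCompleteSublattice_comp_subtype_subgroupOf {N H : Subgroup G} (hNH : N ≤ H) :
    invtCompleteSublattice ((ρ.comp H.subtype).comp (N.subgroupOf H).subtype) =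
      invtCompleteSublattice (ρ.comp N.subtype) := by
  refine SetLike.ext fun p ↦ ?_
  simp only [mem_invtCompleteSublattice]
  exact ⟨fun hp n ↦ hp ⟨⟨n, hNH n.2⟩, n.2⟩, fun hp n ↦ hp ⟨n, n.2⟩⟩

section Averaging

variable {ρ} {H : Subgroup G} [Fintype (G ⧸ H)]

lemma isProj_sumConjCosets {p : Submodule k V} (hp : p ∈ ρ.invtCompleteSublattice)
    (hH : (Fintype.card (G ⧸ H) : k) ≠ 0) {f : Module.End k V} (hf : LinearMap.IsProj p f) :
    LinearMap.IsProj p ((Fintype.card (G ⧸ H) : k)⁻¹ • ρ.sumConjCosets H f) := by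
  have hterm (c : G ⧸ H) (v : V) :
      (ρ c.out * f * ρ c.out⁻¹) v = ρ c.out (f (ρ c.out⁻¹ v)) := rfl
  constructor
  · intro v
    simp only [LinearMap.smul_apply, MonoidHom.sumConjCosets, LinearMap.sum_apply, hterm]
    exact p.smul_mem _ (p.sum_mem fun c _ ↦ mem_invtCompleteSublattice.1 hp _ _ (hf.map_mem _))
  · intro v hv
    simp only [LinearMap.smul_apply, MonoidHom.sumConjCosets, LinearMap.sum_apply, hterm,
      hf.map_id _ (mem_invtCompleteSublattice.1 hp _ v hv), self_inv_apply, Finset.sum_const,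
      Finset.card_univ, ← Nat.cast_smul_eq_nsmul k, smul_smul, inv_mul_cancel₀ hH, one_smul]

lemma exists_isCompl_of_comp_subtype (hH : (Fintype.card (G ⧸ H) : k) ≠ 0) {p q : Submodule k V}
    (hp : p ∈ ρ.invtCompleteSublattice) (hq : q ∈ invtCompleteSublattice (ρ.comp H.subtype))
    (hpq : IsCompl p q) : ∃ q' ∈ ρ.invtCompleteSublattice, IsCompl p q' := by
  have hcomm (h : G) (hh : h ∈ H) : Commute (p.projection q hpq) (ρ h) := by
    rw [LinearMap.IsIdempotentElem.commute_iff (Submodule.isIdempotentElem_projection hpq),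
      Submodule.range_projection, Submodule.ker_projection, Module.End.mem_invtSubmodule,
      Module.End.mem_invtSubmodule]
    exact ⟨fun v hv ↦ mem_invtCompleteSublattice.1 hp h v hv,
      fun v hv ↦ mem_invtCompleteSublattice.1 hq ⟨h, hh⟩ v hv⟩
  have hπ := isProj_sumConjCosets hp hH (f := p.projection q hpq)
    ⟨Submodule.projection_apply_mem hpq, fun _ ↦ Submodule.projection_apply_of_mem_left hpq⟩
  refine ⟨_, mem_invtCompleteSublattice.2 fun g v hv ↦ ?_, hπ.isCompl⟩
  rw [LinearMap.mem_ker] at hv ⊢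
  rw [← Module.End.mul_apply, ((ρ.commute_sumConjCosets hcomm g).smul_left _).eq,
    Module.End.mul_apply, hv, map_zero]

end Averaging

theorem complementedLattice_of_comp_subtype {H : Subgroup G} (hH : (H.index : k) ≠ 0)
    (h : ComplementedLattice (invtCompleteSublattice (ρ.comp H.subtype))) :
    ComplementedLattice ρ.invtCompleteSublattice := by
  have : H.FiniteIndex := ⟨fun h0 ↦ hH (by rw [h0, Nat.cast_zero])⟩
  let := Fintype.ofFinite (G ⧸ H)
  rw [Subgroup.index_eq_card, Nat.card_eq_fintype_card] at hH
  rw [CompleteSublattice.isComplemented_iff] at h ⊢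
  intro p hp
  obtain ⟨q, hq, hpq⟩ := h p (ρ.invtCompleteSublattice_le_comp _ hp)
  exact exists_isCompl_of_comp_subtype hH hp hq hpq

variable {N : Subgroup G} [N.Normal]

lemma map_mem_invtCompleteSublattice_comp_subtype (g : G) {p : Submodule k V}
    (hp : p ∈ invtCompleteSublattice (ρ.comp N.subtype)) :
    p.map (ρ g) ∈ invtCompleteSublattice (ρ.comp N.subtype) := by
  rw [mem_invtCompleteSublattice] at hp ⊢
  rintro n _ ⟨v, hv, rfl⟩
  refine ⟨ρ (g⁻¹ * n * g) v, hp ⟨_, ‹N.Normal›.conj_mem' n n.2 g⟩ v hv, ?_⟩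
  simp [← Module.End.mul_apply, ← map_mul, mul_assoc]

lemma submodule_map_map_inv (g : G) (p : Submodule k V) : (p.map (ρ g)).map (ρ g⁻¹) = p := by
  rw [← Submodule.map_comp, ← Module.End.mul_eq_comp, ← map_mul, inv_mul_cancel, map_one,
    Module.End.one_eq_id, Submodule.map_id]

variable (N) in
def mapInvtCompleteSublattice (g : G) :
    invtCompleteSublattice (ρ.comp N.subtype) ≃o invtCompleteSublattice (ρ.comp N.subtype) where
  toFun p := ⟨p.1.map (ρ g), ρ.map_mem_invtCompleteSublattice_comp_subtype g p.2⟩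
  invFun p := ⟨p.1.map (ρ g⁻¹), ρ.map_mem_invtCompleteSublattice_comp_subtype g⁻¹ p.2⟩
  left_inv p := Subtype.ext (ρ.submodule_map_map_inv g p)
  right_inv p := Subtype.ext (by simpa using ρ.submodule_map_map_inv g⁻¹ p)
  map_rel_iff' {p q} := by
    refine ⟨fun h ↦ ?_, fun h ↦ Submodule.map_mono h⟩
    simpa [submodule_map_map_inv] using Submodule.map_mono (f := ρ g⁻¹) h

variable (N) in
theorem complementedLattice_comp_subtype_of_normal [FiniteDimensional k V]
    (h : ComplementedLattice ρ.invtCompleteSublattice) :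
    ComplementedLattice (invtCompleteSublattice (ρ.comp N.subtype)) := by
  have := CompleteLattice.isCompactlyGenerated_of_wellFoundedGT
    (α := invtCompleteSublattice (ρ.comp N.subtype))
  refine complementedLattice_of_forall_fixed_exists_isCompl (ρ.mapInvtCompleteSublattice N)
    fun p hp ↦ ?_
  have hpG : (p : Submodule k V) ∈ ρ.invtCompleteSublattice :=
    mem_invtCompleteSublattice.2 fun g v hv ↦ by
      rw [← congrArg Subtype.val (hp g)]
      exact Submodule.mem_map_of_mem hv
  obtain ⟨q, hq, hpq⟩ := CompleteSublattice.isComplemented_iff.1 h p hpG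
  exact ⟨⟨q, ρ.invtCompleteSublattice_le_comp _ hq⟩, CompleteSublattice.isCompl_iff.2 hpq⟩

end Group

end Representation

theorem semisimple_iff_semisimple_restrict_finiteIndex
    (L : Type*) [Field L] [CharZero L]
    (V : Type*) [AddCommGroup V] [Module L V] [FiniteDimensional L V]
    (G : Type*) [Group G] (H : Subgroup G) [H.FiniteIndex]
    (ρ : Representation L G V) :
    IsSemisimpleModule (MonoidAlgebra L G) ρ.asModule ↔
      IsSemisimpleModule (MonoidAlgebra L ↥H)
        (Representation.asModule (MonoidHom.comp ρ H.subtype)) := by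
  rw [ρ.isSemisimpleModule_asModule_iff, Representation.isSemisimpleModule_asModule_iff]
  refine ⟨fun h ↦ ?_, ρ.complementedLattice_of_comp_subtype
    (Nat.cast_ne_zero.2 Subgroup.FiniteIndex.index_ne_zero)⟩
  have hN := ρ.complementedLattice_comp_subtype_of_normal H.normalCore h
  rw [← ρ.invtCompleteSublattice_comp_subtype_subgroupOf H.normalCore_le] at hN
  exact Representation.complementedLattice_of_comp_subtype _
    (Nat.cast_ne_zero.2 Subgroup.index_ne_zero_of_finite) hN
end

section
/- Let C be an algebraically closed field of characteristic 0, G a group, and ρ₁, ρ₂ : G → GLₙ(C) two semisimple finite-dimensional representations with equal character, i.e. trace ρ₁(g) = trace ρ₂(g) for all g ∈ G. Then ρ₁ and ρ₂ are isomorphic. -/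
/-! Regard the representations as semisimple modules `M`, `N` over `A = C[G]`, finite-dimensional
over `C`. For a simple module `S`, the projection of `M × N` onto its `S`-isotypic component along
the other isotypic components commutes with every `A`-linear endomorphism, so by Jacobson density
it is the action of some `a : A`. This `a` acts on `M` and on `N` as the projection onto their own
`S`-isotypic components, and the trace of a projection is the dimension of its range; in
characteristic zero, equal traces therefore give `S`-isotypic components of equal dimension. Hence
every simple submodule of `M` has an isomorphic copy in `N`; splitting off the two copies and
inducting on the dimension gives `M ≃ N`. -/

open Module LinearMap

section Semisimple

variable {R M N : Type*} [Ring R] [AddCommGroup M] [Module R M] [AddCommGroup N] [Module R N]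

instance IsSemisimpleModule.prod [IsSemisimpleModule R M] [IsSemisimpleModule R N] :
    IsSemisimpleModule R (M × N) := by
  have := (IsSemisimpleModule.range (inl R M N)).sup (IsSemisimpleModule.range (inr R M N))
  rw [sup_range_inl_inr] at this
  exact .congr Submodule.topEquiv.symm

variable [IsSemisimpleModule R M]

theorem Submodule.IsFullyInvariant.exists_isFullyInvariant_isCompl {m : Submodule R M}
    (hm : m.IsFullyInvariant) : ∃ m' : Submodule R M, m'.IsFullyInvariant ∧ IsCompl m m' :=
  CompleteSublattice.isComplemented_iff.mp
    (OrderIso.setIsotypicComponents (R := R) (M := M)).complementedLattice m hm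

theorem exists_isProj_isotypicComponent_commute (S : Type*) [AddCommGroup S] [Module R S]
    [IsSimpleModule R S] :
    ∃ π : Module.End R M, IsProj (isotypicComponent R M S) π ∧ ∀ f, Commute π f := by
  obtain ⟨J, hJ, hIJ⟩ :=
    (Submodule.IsFullyInvariant.isotypicComponent R M S).exists_isFullyInvariant_isCompl
  refine ⟨(isotypicComponent R M S).projection J hIJ, ⟨Submodule.projection_apply_mem hIJ,
    fun x hx => Submodule.projection_apply_of_mem_left hIJ hx⟩, fun f => ?_⟩
  rw [(Submodule.isIdempotentElem_projection hIJ).commute_iff, Submodule.range_projection,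
    Submodule.ker_projection]
  exact ⟨Submodule.IsFullyInvariant.isotypicComponent R M S f, hJ f⟩

end Semisimple

section Algebra

variable {k A : Type*} [Field k] [Ring A] [Algebra k A]
variable {M N : Type*} [AddCommGroup M] [Module k M] [Module A M] [IsScalarTower k A M]
  [AddCommGroup N] [Module k N] [Module A N] [IsScalarTower k A N]

instance Submodule.finiteDimensional_of_isScalarTower [FiniteDimensional k M]
    (p : Submodule A M) : FiniteDimensional k p :=
  inferInstanceAs (FiniteDimensional k (p.restrictScalars k))

theorem exists_smul_eq_of_forall_commute [IsSemisimpleModule A M] [Module.Finite k M]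
    (π : Module.End A M) (hπ : ∀ f, Commute π f) : ∃ a : A, ∀ x, a • x = π x := by
  have : Module.Finite (Module.End A M) M := .of_restrictScalars_finite k _ _
  obtain ⟨a, ha⟩ := Module.Finite.toModuleEnd_moduleEnd_surjective (R := A) (M := M)
    { toFun := π, map_add' := π.map_add, map_smul' := fun f x => congr($(hπ f) x) }
  exact ⟨a, fun x => congr($ha x)⟩

theorem exists_isProj_lsmul_isotypicComponent [IsSemisimpleModule A M] [Module.Finite k M]
    (S : Type*) [AddCommGroup S] [Module A S] [IsSimpleModule A S] :
    ∃ a : A, IsProj ((isotypicComponent A M S).restrictScalars k) (Algebra.lsmul k k M a) := by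
  obtain ⟨π, hπ, hcomm⟩ := exists_isProj_isotypicComponent_commute (R := A) (M := M) S
  obtain ⟨a, ha⟩ := exists_smul_eq_of_forall_commute (k := k) π hcomm
  exact ⟨a, fun x => by rw [Algebra.lsmul_apply, ha]; exact hπ.map_mem x,
    fun x hx => (ha x).trans (hπ.map_id x hx)⟩

theorem LinearMap.IsProj.lsmul_isotypicComponent_of_comp_eq_id {P : Type*} [AddCommGroup P]
    [Module k P] [Module A P] [IsScalarTower k A P] {S : Type*} [AddCommGroup S] [Module A S]
    [IsSimpleModule A S] {a : A}
    (ha : IsProj ((isotypicComponent A P S).restrictScalars k) (Algebra.lsmul k k P a))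
    (f : M →ₗ[A] P) (g : P →ₗ[A] M) (hgf : g ∘ₗ f = LinearMap.id) :
    IsProj ((isotypicComponent A M S).restrictScalars k) (Algebra.lsmul k k M a) := by
  have hg (m : M) : g (f m) = m := congr($hgf m)
  refine ⟨fun m => ?_, fun m hm => ?_⟩
  · rw [Algebra.lsmul_apply, ← hg m, ← map_smul]
    exact g.le_comap_isotypicComponent S (ha.map_mem (f m))
  · rw [Algebra.lsmul_apply, ← hg m, ← map_smul]
    exact congr_arg g (ha.map_id _ (f.le_comap_isotypicComponent S hm))

theorem trace_lsmul_eq_of_linearEquiv (e : M ≃ₗ[A] N) (a : A) :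
    trace k M (Algebra.lsmul k k M a) = trace k N (Algebra.lsmul k k N a) := by
  rw [← trace_conj' _ (e.restrictScalars k)]
  congr 1
  ext x
  simp [LinearEquiv.conj_apply]

variable [FiniteDimensional k M] [FiniteDimensional k N]

theorem trace_lsmul_eq_add_of_isCompl {p q : Submodule A M} (h : IsCompl p q) (a : A) :
    trace k M (Algebra.lsmul k k M a)
      = trace k p (Algebra.lsmul k k p a) + trace k q (Algebra.lsmul k k q a) := by
  rw [← trace_lsmul_eq_of_linearEquiv (Submodule.prodEquivOfIsCompl p q h) a, ← trace_prodMap']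
  rfl

variable [CharZero k]
  (htr : ∀ a : A, trace k M (Algebra.lsmul k k M a) = trace k N (Algebra.lsmul k k N a))
include htr

theorem finrank_eq_of_trace_lsmul_eq : finrank k M = finrank k N := by
  have := htr 1
  simp only [map_one, trace_one] at this
  exact_mod_cast this

theorem finrank_isotypicComponent_eq_of_trace_lsmul_eq [IsSemisimpleModule A M]
    [IsSemisimpleModule A N] (S : Type*) [AddCommGroup S] [Module A S] [IsSimpleModule A S] :
    finrank k (isotypicComponent A M S) = finrank k (isotypicComponent A N S) := by
  obtain ⟨a, ha⟩ := exists_isProj_lsmul_isotypicComponent (k := k) (A := A) (M := M × N) S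
  have hM := ha.lsmul_isotypicComponent_of_comp_eq_id (inl A M N) (fst A M N) (fst_comp_inl A M N)
  have hN := ha.lsmul_isotypicComponent_of_comp_eq_id (inr A M N) (snd A M N) (snd_comp_inr A M N)
  have := htr a
  rw [hM.trace, hN.trace] at this
  exact_mod_cast this

theorem exists_linearEquiv_simple_submodule_of_trace_lsmul_eq [IsSemisimpleModule A M]
    [IsSemisimpleModule A N] (S : Submodule A M) [IsSimpleModule A S] :
    ∃ T : Submodule A N, IsSimpleModule A T ∧ Nonempty (S ≃ₗ[A] T) := by
  have hpos : 0 < finrank k (isotypicComponent A N S) := by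
    rw [← finrank_isotypicComponent_eq_of_trace_lsmul_eq htr]
    have := Submodule.nontrivial_iff_ne_bot.mpr (bot_lt_isotypicComponent S).ne'
    exact finrank_pos
  obtain ⟨T, ⟨e⟩⟩ : {T : Submodule A N | Nonempty (T ≃ₗ[A] S)}.Nonempty := by
    contrapose! hpos
    rw [isotypicComponent, hpos, sSup_empty, finrank_zero_of_subsingleton]
  exact ⟨T, .congr e, ⟨e.symm⟩⟩

theorem IsSemisimpleModule.nonempty_linearEquiv_of_trace_lsmul_eq [IsSemisimpleModule A M]
    [IsSemisimpleModule A N] : Nonempty (M ≃ₗ[A] N) := by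
  induction hd : finrank k M using Nat.strong_induction_on generalizing M N with
  | _ d ih =>
  rcases subsingleton_or_nontrivial M with hM | hM
  · have : Subsingleton N := finrank_zero_iff.mp <|
      (finrank_eq_of_trace_lsmul_eq htr).symm.trans finrank_zero_of_subsingleton
    exact ⟨.ofSubsingleton M N⟩
  obtain ⟨S, -, hS⟩ :=
    (IsSemisimpleModule.eq_bot_or_exists_simple_le (⊤ : Submodule A M)).resolve_left top_ne_bot
  obtain ⟨T, hT, ⟨e⟩⟩ := exists_linearEquiv_simple_submodule_of_trace_lsmul_eq htr S
  obtain ⟨S', hS'⟩ := exists_isCompl S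
  obtain ⟨T', hT'⟩ := exists_isCompl T
  have htr' (a : A) :
      trace k S' (Algebra.lsmul k k S' a) = trace k T' (Algebra.lsmul k k T' a) := by
    have := htr a
    rw [trace_lsmul_eq_add_of_isCompl hS', trace_lsmul_eq_add_of_isCompl hT',
      trace_lsmul_eq_of_linearEquiv e] at this
    exact add_left_cancel this
  have hlt : finrank k S' < d := by
    have := IsSimpleModule.nontrivial A S
    rw [← hd, ← ((S.prodEquivOfIsCompl S' hS').restrictScalars k).finrank_eq, finrank_prod]
    exact Nat.lt_add_of_pos_left finrank_pos
  obtain ⟨e'⟩ := ih _ hlt htr' rfl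
  exact ⟨(S.prodEquivOfIsCompl S' hS').symm ≪≫ₗ e.prodCongr e' ≪≫ₗ
    T.prodEquivOfIsCompl T' hT'⟩

end Algebra

theorem Representation.trace_asAlgebraHom_eq_of_trace_eq {k G V W : Type*} [CommRing k]
    [Monoid G] [AddCommGroup V] [Module k V] [AddCommGroup W] [Module k W]
    {ρ : Representation k G V} {σ : Representation k G W}
    (h : ∀ g, trace k V (ρ g) = trace k W (σ g)) (a : MonoidAlgebra k G) :
    trace k V (ρ.asAlgebraHom a) = trace k W (σ.asAlgebraHom a) := by
  induction a using MonoidAlgebra.induction_linear with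
  | zero => simp only [map_zero]
  | add x y hx hy => simp only [map_add, hx, hy]
  | single g c => simp only [asAlgebraHom_single, map_smul, h g]

theorem semisimple_rep_iso_of_trace_eq_general
    (C : Type*) [Field C] [CharZero C]
    (G : Type*) [Group G] (n : ℕ)
    (ρ₁ ρ₂ : Representation C G (Fin n → C))
    (h₁ : IsSemisimpleModule (MonoidAlgebra C G) ρ₁.asModule)
    (h₂ : IsSemisimpleModule (MonoidAlgebra C G) ρ₂.asModule)
    (htr : ∀ g : G, LinearMap.trace C (Fin n → C) (ρ₁ g)
      = LinearMap.trace C (Fin n → C) (ρ₂ g)) :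
    Nonempty (ρ₁.asModule ≃ₗ[MonoidAlgebra C G] ρ₂.asModule) := by
  have key (a : MonoidAlgebra C G) : trace C ρ₁.asModule (Algebra.lsmul C C ρ₁.asModule a)
      = trace C ρ₂.asModule (Algebra.lsmul C C ρ₂.asModule a) :=
    Representation.trace_asAlgebraHom_eq_of_trace_eq htr a
  exact IsSemisimpleModule.nonempty_linearEquiv_of_trace_lsmul_eq key

/-- Brauer–Nesbitt / Taylor: two semisimple finite-dimensional representations of a group
over an algebraically closed field of characteristic zero with the same trace function
are isomorphic. -/
theorem semisimple_rep_iso_of_trace_eq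
    (C : Type*) [Field C] [IsAlgClosed C] [CharZero C]
    (G : Type*) [Group G] (n : ℕ)
    (ρ₁ ρ₂ : Representation C G (Fin n → C))
    (h₁ : IsSemisimpleModule (MonoidAlgebra C G) ρ₁.asModule)
    (h₂ : IsSemisimpleModule (MonoidAlgebra C G) ρ₂.asModule)
    (htr : ∀ g : G, LinearMap.trace C (Fin n → C) (ρ₁ g)
      = LinearMap.trace C (Fin n → C) (ρ₂ g)) :
    Nonempty (ρ₁.asModule ≃ₗ[MonoidAlgebra C G] ρ₂.asModule) :=
  semisimple_rep_iso_of_trace_eq_general C G n ρ₁ ρ₂ h₁ h₂ htr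
end

section
/- Let p be a prime and f ∈ ℤ_p[[X]] a nonzero formal power series. Then the set of x in the maximal ideal of the ring of integers of ℂ_p (i.e., x ∈ ℂ_p with |x| < 1) at which f converges to 0 is finite. -/
/-!
Strassmann's argument. Scaling by the inverse of a coefficient of maximal norm (one exists since
`ℤ_p`-norms are discrete), we may assume all `‖bₙ‖ ≤ 1` and `‖b_N‖ = 1`. If `N = 0`, the constant
term strictly dominates every other term on the open disc, so there is no zero. Otherwise, for a
zero `α` write `f(X) = (X - α) g(X)`: the coefficients `gᵢ = ∑ⱼ b_{i+j+1} αʲ` again have norm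
`≤ 1`, and `‖g_{N-1}‖ = ‖b_N‖ = 1` by the ultrametric inequality, so induction on `N` applies.
-/

open Filter Topology IsUltrametricDist

section Strassmann

variable {K : Type*} [NormedField K]

theorem tendsto_mul_pow_atTop_zero {b : ℕ → K} {C : ℝ} (hb : ∀ n, ‖b n‖ ≤ C) {x : K}
    (hx : ‖x‖ < 1) : Tendsto (fun n => b n * x ^ n) atTop (𝓝 0) := by
  rw [tendsto_zero_iff_norm_tendsto_zero]
  have hC : Tendsto (fun n => C * ‖x‖ ^ n) atTop (𝓝 0) := by
    simpa using (tendsto_pow_atTop_nhds_zero_of_lt_one (norm_nonneg x) hx).const_mul C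
  refine squeeze_zero (fun n => norm_nonneg _) (fun n => ?_) hC
  rw [norm_mul, norm_pow]
  exact mul_le_mul_of_nonneg_right (hb n) (by positivity)

def discZeros (b : ℕ → K) : Set K :=
  {x | ‖x‖ < 1 ∧ HasSum (fun n => b n * x ^ n) 0}

theorem discZeros_const_mul {b : ℕ → K} {c : K} (hc : c ≠ 0) :
    discZeros (fun n => c * b n) = discZeros b := by
  ext x
  refine and_congr_right fun _ => ?_
  simpa only [mul_assoc, mul_zero] using
    hasSum_mul_left_iff (f := fun n => b n * x ^ n) (a₁ := 0) hc

/-- Coefficients of `(f(X) - f(α)) / (X - α)` for `f = ∑ bₙ Xⁿ`. -/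
noncomputable def divByLinear (b : ℕ → K) (α : K) (i : ℕ) : K :=
  ∑' j, b (i + j + 1) * α ^ j

variable [IsUltrametricDist K]

theorem norm_tsum_mul_pow_le_one {b : ℕ → K} (hb : ∀ n, ‖b n‖ ≤ 1) {x : K} (hx : ‖x‖ ≤ 1) :
    ‖∑' n, b n * x ^ n‖ ≤ 1 :=
  norm_tsum_le_of_forall_le_of_nonneg zero_le_one fun n => by
    rw [norm_mul, norm_pow]
    exact mul_le_one₀ (hb n) (by positivity) (pow_le_one₀ (norm_nonneg x) hx)

theorem norm_divByLinear_le_one {b : ℕ → K} (hb : ∀ n, ‖b n‖ ≤ 1) {α : K} (hα : ‖α‖ < 1)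
    (i : ℕ) : ‖divByLinear b α i‖ ≤ 1 :=
  norm_tsum_mul_pow_le_one (fun _ => hb _) hα.le

variable [CompleteSpace K]

theorem summable_mul_pow {b : ℕ → K} {C : ℝ} (hb : ∀ n, ‖b n‖ ≤ C) {x : K} (hx : ‖x‖ < 1) :
    Summable (fun n => b n * x ^ n) :=
  NonarchimedeanAddGroup.summable_of_tendsto_cofinite_zero <| by
    simpa only [Nat.cofinite_eq_atTop] using tendsto_mul_pow_atTop_zero hb hx

theorem discZeros_eq_empty {b : ℕ → K} (hb : ∀ n, ‖b n‖ ≤ 1) (hb₀ : ‖b 0‖ = 1) :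
    discZeros b = ∅ := by
  refine Set.eq_empty_of_forall_notMem fun x ⟨hx, hsum⟩ => ?_
  have htail : ‖x * ∑' n, b (n + 1) * x ^ n‖ < ‖b 0‖ := by
    rw [norm_mul, hb₀]
    exact (mul_le_of_le_one_right (norm_nonneg x)
      (norm_tsum_mul_pow_le_one (fun n => hb (n + 1)) hx.le)).trans_lt hx
  have hsplit : ∑' n, b n * x ^ n = b 0 + x * ∑' n, b (n + 1) * x ^ n := by
    rw [(summable_mul_pow hb hx).tsum_eq_zero_add, ← tsum_mul_left]
    simp only [pow_zero, mul_one, pow_succ]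
    congr 1
    exact tsum_congr fun n => by ring
  have h : ‖b 0 + x * ∑' n, b (n + 1) * x ^ n‖ = 1 := by
    rw [norm_add_eq_max_of_norm_ne_norm htail.ne', max_eq_left htail.le, hb₀]
  rw [← hsplit, hsum.tsum_eq, norm_zero] at h
  exact zero_ne_one h

theorem divByLinear_eq_add {b : ℕ → K} (hb : ∀ n, ‖b n‖ ≤ 1) {α : K} (hα : ‖α‖ < 1) (i : ℕ) :
    divByLinear b α i = b (i + 1) + α * divByLinear b α (i + 1) := by
  rw [divByLinear, (summable_mul_pow (fun j => hb (i + j + 1)) hα).tsum_eq_zero_add,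
    divByLinear, ← tsum_mul_left]
  simp only [add_zero, pow_zero, mul_one, pow_succ]
  congr 1
  exact tsum_congr fun j => by rw [show i + (j + 1) + 1 = i + 1 + j + 1 by omega]; ring

theorem mul_divByLinear_zero {b : ℕ → K} (hb : ∀ n, ‖b n‖ ≤ 1) {α : K} (hα : ‖α‖ < 1) :
    α * divByLinear b α 0 = ∑' n, b n * α ^ n - b 0 := by
  rw [(summable_mul_pow hb hα).tsum_eq_zero_add, divByLinear, ← tsum_mul_left]
  simp only [pow_zero, mul_one, zero_add, pow_succ, add_sub_cancel_left]
  exact tsum_congr fun j => by ring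

theorem norm_divByLinear_eq_one {b : ℕ → K} (hb : ∀ n, ‖b n‖ ≤ 1) {α : K} (hα : ‖α‖ < 1)
    {N : ℕ} (hN : ‖b (N + 1)‖ = 1) : ‖divByLinear b α N‖ = 1 := by
  have hlt : ‖α * divByLinear b α (N + 1)‖ < ‖b (N + 1)‖ := by
    rw [norm_mul, hN]
    exact (mul_le_of_le_one_right (norm_nonneg α) (norm_divByLinear_le_one hb hα _)).trans_lt hα
  rw [divByLinear_eq_add hb hα, norm_add_eq_max_of_norm_ne_norm hlt.ne', max_eq_left hlt.le, hN]

theorem sub_mul_sum_range_divByLinear {b : ℕ → K} (hb : ∀ n, ‖b n‖ ≤ 1) {α : K} (hα : ‖α‖ < 1)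
    (x : K) (n : ℕ) :
    (x - α) * ∑ i ∈ Finset.range (n + 1), divByLinear b α i * x ^ i =
      ∑ i ∈ Finset.range (n + 1), b i * x ^ i + divByLinear b α n * x ^ (n + 1) -
        ∑' n, b n * α ^ n := by
  induction n with
  | zero =>
    simp only [zero_add, Finset.sum_range_one, pow_zero, mul_one, pow_one]
    linear_combination -mul_divByLinear_zero hb hα
  | succ n ih =>
    rw [Finset.sum_range_succ (fun i => divByLinear b α i * x ^ i), mul_add, ih,
      Finset.sum_range_succ (fun i => b i * x ^ i) (n + 1)]
    linear_combination x ^ (n + 1) * divByLinear_eq_add hb hα n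

theorem sub_mul_tsum_divByLinear {b : ℕ → K} (hb : ∀ n, ‖b n‖ ≤ 1) {α x : K} (hα : ‖α‖ < 1)
    (hx : ‖x‖ < 1) :
    (x - α) * ∑' n, divByLinear b α n * x ^ n = ∑' n, b n * x ^ n - ∑' n, b n * α ^ n := by
  have hpartial (s : ℕ → K) (hs : ∀ n, ‖s n‖ ≤ 1) :
      Tendsto (fun n => ∑ i ∈ Finset.range (n + 1), s i * x ^ i) atTop
        (𝓝 (∑' n, s n * x ^ n)) :=
    (summable_mul_pow hs hx).hasSum.tendsto_sum_nat.comp (tendsto_add_atTop_nat 1)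
  have hrem : Tendsto (fun n => divByLinear b α n * x ^ (n + 1)) atTop (𝓝 0) := by
    simpa [pow_succ, mul_assoc] using
      (tendsto_mul_pow_atTop_zero (norm_divByLinear_le_one hb hα) hx).mul_const x
  refine tendsto_nhds_unique ((hpartial _ (norm_divByLinear_le_one hb hα)).const_mul (x - α)) ?_
  simp only [sub_mul_sum_range_divByLinear hb hα]
  simpa using ((hpartial b hb).add hrem).sub_const (∑' n, b n * α ^ n)

theorem discZeros_subset_insert_divByLinear {b : ℕ → K} (hb : ∀ n, ‖b n‖ ≤ 1) {α : K}
    (hα : α ∈ discZeros b) : discZeros b ⊆ insert α (discZeros (divByLinear b α)) := by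
  rintro x ⟨hx, hsum⟩
  rcases eq_or_ne x α with rfl | hxα
  · exact Set.mem_insert x _
  refine Or.inr ⟨hx, ?_⟩
  have h := sub_mul_tsum_divByLinear hb hα.1 hx
  rw [hsum.tsum_eq, hα.2.tsum_eq, sub_zero, mul_eq_zero, sub_eq_zero] at h
  simpa [h.resolve_left hxα] using (summable_mul_pow (norm_divByLinear_le_one hb hα.1) hx).hasSum

theorem finite_discZeros {b : ℕ → K} (hb : ∀ n, ‖b n‖ ≤ 1) {N : ℕ} (hN : ‖b N‖ = 1) :
    (discZeros b).Finite := by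
  induction N generalizing b with
  | zero => simp [discZeros_eq_empty hb hN]
  | succ N ih =>
    rcases (discZeros b).eq_empty_or_nonempty with h | ⟨α, hα⟩
    · simp [h]
    exact ((ih (norm_divByLinear_le_one hb hα.1) (norm_divByLinear_eq_one hb hα.1 hN)).insert
      α).subset (discZeros_subset_insert_divByLinear hb hα)

end Strassmann

theorem PadicInt.exists_ne_zero_forall_norm_le {p : ℕ} [Fact p.Prime] {ι : Type*}
    {a : ι → ℤ_[p]} (ha : a ≠ 0) : ∃ N, a N ≠ 0 ∧ ∀ n, ‖a n‖ ≤ ‖a N‖ := by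
  obtain ⟨N, hN, hmin⟩ := (InvImage.wf (fun n => (a n).valuation) wellFounded_lt).has_min
    {n | a n ≠ 0} (Function.ne_iff.mp ha)
  refine ⟨N, hN, fun n => ?_⟩
  by_cases hn : a n = 0
  · simp [hn]
  rw [PadicInt.norm_eq_zpow_neg_valuation hN, PadicInt.norm_le_pow_iff_le_valuation _ hn]
  exact not_lt.mp (hmin n hn)

/-- A nonzero power series with `ℤ_p` coefficients has only finitely many zeros in the open
unit disc of a complete nonarchimedean valued extension (such as `ℂ_p`). -/
theorem finite_zeros_of_padic_power_series
    (p : ℕ) [Fact p.Prime] (f : PowerSeries ℤ_[p]) (hf : f ≠ 0)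
    (K : Type*) [NormedField K] [IsUltrametricDist K] [CompleteSpace K]
    [Algebra ℤ_[p] K]
    (hiso : ∀ z : ℤ_[p], ‖algebraMap ℤ_[p] K z‖ = ‖z‖) :
    {x : K | ‖x‖ < 1 ∧
      HasSum (fun n : ℕ => algebraMap ℤ_[p] K (PowerSeries.coeff n f) * x ^ n) 0}.Finite := by
  obtain ⟨N, hN, hmax⟩ := PadicInt.exists_ne_zero_forall_norm_le (a := (PowerSeries.coeff · f))
    fun h => hf (PowerSeries.ext (congrFun h))
  set a : ℕ → K := fun n => algebraMap ℤ_[p] K (PowerSeries.coeff n f)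
  have haN : a N ≠ 0 := by rwa [← norm_ne_zero_iff, hiso, norm_ne_zero_iff]
  have hfin := finite_discZeros (b := fun n => (a N)⁻¹ * a n) (N := N)
    (fun n => by
      rw [norm_mul, norm_inv, inv_mul_le_one₀ (norm_pos_iff.mpr haN), hiso, hiso]
      exact hmax n)
    (by rw [inv_mul_cancel₀ haN, norm_one])
  rwa [discZeros_const_mul (inv_ne_zero haN)] at hfin
end
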